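/- arXiv:2501.07144 — 4 statements merged into one kernel-verified Lean document; each statement's English description precedes it below -/
import Mathlib

section
/- Heine's identity: for a weight w on an interval I with monic orthogonal polynomials (p_j), the average of the characteristic polynomial over the β=2 matrix ensemble equals the N-th orthogonal polynomial: ⟨∏_{l=1}^N (x − λ_l)⟩ = p_N(x), where the average is with respect to the probability density proportional to ∏_l w(λ_l) ∏_{j<k}(λ_k − λ_j)² on I^N. -/
/-!
Let `Δ(λ) = ∏_{j<k} (λ_k - λ_j)`. Because `p_j` is monic of degree `j`, column operations give
`Δ(λ) = det [p_i(λ_k)]`, and the Laplace expansion of `Δ(x, λ_1, …, λ_N) = Δ(λ) ∏ (λ_m - x)`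
along the row of `x` gives `Δ(λ) ∏ (x - λ_m) = ∑_j ± p_j(x) det [p_i(λ_k)]_{i ≠ j}`. Multiplying
by `∏ w(λ_l) Δ(λ) = det [w(λ_k) p_i(λ_k)]` and integrating, Andréief's identity turns each term
into `N!` times a determinant of inner products `∫ w p_a p_b`. For `j < N` one row of it belongs
to `p_N`, which is orthogonal to `p_0, …, p_{N-1}`, so only the term `j = N` survives, and that
term is `p_N(x)` times the normalisation.
-/

open MeasureTheory Matrix Polynomial

namespace Matrix

variable {R : Type*} [CommRing R] {ι : Type*} [Fintype ι] [DecidableEq ι]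

theorem sum_perm_sum_perm_sign_mul_prod (c : Matrix ι ι R) :
    ∑ σ : Equiv.Perm ι, ∑ τ : Equiv.Perm ι,
        ((Equiv.Perm.sign σ : ℤ) * (Equiv.Perm.sign τ : ℤ) : R) * ∏ k, c (σ k) (τ k)
      = (Fintype.card ι).factorial * c.det := by
  have hσ : ∀ σ : Equiv.Perm ι, ∑ τ : Equiv.Perm ι,
      ((Equiv.Perm.sign σ : ℤ) * (Equiv.Perm.sign τ : ℤ) : R) * ∏ k, c (σ k) (τ k) = c.det := by
    intro σ
    have hrow : ∑ τ : Equiv.Perm ι, ((Equiv.Perm.sign τ : ℤ) : R) * ∏ k, c (σ k) (τ k)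
        = (Equiv.Perm.sign σ : ℤ) * c.det := by
      rw [← det_permute, ← det_transpose, det_apply']
      rfl
    simp_rw [mul_assoc, ← Finset.mul_sum, hrow, ← mul_assoc, ← Int.cast_mul, ← Units.val_mul,
      Int.units_mul_self, Units.val_one, Int.cast_one, one_mul]
  simp_rw [hσ, Finset.sum_const, Finset.card_univ, Fintype.card_perm, nsmul_eq_mul]

theorem det_of_mul_det_of {α : Type*} (f g : ι → α → R) (x : ι → α) :
    det (of fun k i => f i (x k)) * det (of fun k i => g i (x k))
      = ∑ σ : Equiv.Perm ι, ∑ τ : Equiv.Perm ι,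
          ((Equiv.Perm.sign σ : ℤ) * (Equiv.Perm.sign τ : ℤ) : R) *
            ∏ k, f (σ k) (x k) * g (τ k) (x k) := by
  rw [← det_transpose, ← det_transpose (of _), det_apply', det_apply', Finset.sum_mul_sum]
  refine Finset.sum_congr rfl fun σ _ => Finset.sum_congr rfl fun τ _ => ?_
  simp only [transpose_apply, of_apply, Finset.prod_mul_distrib]
  ring

section Vandermonde

variable {R : Type*} [CommRing R] {P : ℕ → R[X]} {n : ℕ}

theorem det_vandermonde_eq_det_eval (hmonic : ∀ j, (P j).Monic)
    (hdeg : ∀ j, (P j).natDegree = j) (v : Fin n → R) :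
    (vandermonde v).det = det (of fun k (i : Fin n) => (P i).eval (v k)) :=
  det_eval_matrixOfPolynomials_eq_det_vandermonde v (fun i => P i) (fun i => hdeg i)
    (fun i => hmonic i)

theorem prod_mul_det_vandermonde (hmonic : ∀ j, (P j).Monic) (hdeg : ∀ j, (P j).natDegree = j)
    (w : R → R) (v : Fin n → R) :
    (∏ l, w (v l)) * (vandermonde v).det
      = det (of fun k (i : Fin n) => w (v k) * (P i).eval (v k)) := by
  rw [det_vandermonde_eq_det_eval hmonic hdeg, ← det_mul_column]
  rfl

theorem prod_mul_det_vandermonde_sq (hmonic : ∀ j, (P j).Monic)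
    (hdeg : ∀ j, (P j).natDegree = j) (w : R → R) (v : Fin n → R) :
    (∏ l, w (v l)) * (vandermonde v).det ^ 2
      = det (of fun k (i : Fin n) => (P i).eval (v k)) *
          det (of fun k (i : Fin n) => w (v k) * (P i).eval (v k)) := by
  rw [sq, ← mul_assoc, prod_mul_det_vandermonde hmonic hdeg,
    det_vandermonde_eq_det_eval hmonic hdeg, mul_comm]

theorem prod_sub_mul_det_vandermonde (hmonic : ∀ j, (P j).Monic)
    (hdeg : ∀ j, (P j).natDegree = j) (x : R) (v : Fin n → R) :
    (∏ m, (x - v m)) * (vandermonde v).det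
      = ∑ j : Fin (n + 1), (-1) ^ (n + j : ℕ) * (P j).eval x *
          det (of fun k i => (P (j.succAbove i)).eval (v k)) := by
  have hcons : (vandermonde (Fin.cons x v)).det = (∏ m, (v m - x)) * (vandermonde v).det := by
    rw [det_vandermonde, det_vandermonde, Fin.prod_univ_succ, Fin.prod_Ioi_zero]
    simp only [Fin.cons_zero, Fin.cons_succ, Fin.prod_Ioi_succ]
  have hflip : ∏ m, (x - v m) = (-1) ^ n * ∏ m, (v m - x) := by
    simp_rw [← neg_sub (v _) x, Finset.prod_neg, Finset.card_univ, Fintype.card_fin]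
  rw [hflip, mul_assoc, ← hcons, det_vandermonde_eq_det_eval hmonic hdeg, det_succ_row_zero,
    Finset.mul_sum]
  refine Finset.sum_congr rfl fun j _ => ?_
  simp only [pow_add, of_apply, Fin.cons_zero, submatrix, Fin.cons_succ]
  ring

theorem prod_sub_mul_prod_mul_det_vandermonde_sq (hmonic : ∀ j, (P j).Monic)
    (hdeg : ∀ j, (P j).natDegree = j) (w : R → R) (x : R) (v : Fin n → R) :
    (∏ m, (x - v m)) * ((∏ l, w (v l)) * (vandermonde v).det ^ 2)
      = ∑ j : Fin (n + 1), (-1) ^ (n + j : ℕ) * (P j).eval x *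
          (det (of fun k i => (P (j.succAbove i)).eval (v k)) *
            det (of fun k (i : Fin n) => w (v k) * (P i).eval (v k))) := by
  rw [sq, ← mul_assoc, mul_mul_mul_comm, prod_mul_det_vandermonde hmonic hdeg w,
    prod_sub_mul_det_vandermonde hmonic hdeg, Finset.sum_mul]
  simp_rw [mul_assoc]

end Vandermonde

end Matrix

section Andreief

variable {𝕜 : Type*} [RCLike 𝕜] {ι : Type*} [Fintype ι] [DecidableEq ι]
  {α : Type*} [MeasurableSpace α] {μ : Measure α} [SigmaFinite μ] {f g : ι → α → 𝕜}

theorem integrable_det_of_mul_det_of (hfg : ∀ i j, Integrable (fun t => f i t * g j t) μ) :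
    Integrable (fun x : ι → α => det (of fun k i => f i (x k)) * det (of fun k i => g i (x k)))
      (Measure.pi fun _ => μ) := by
  simp_rw [det_of_mul_det_of]
  exact integrable_finsetSum _ fun σ _ => integrable_finsetSum _ fun τ _ =>
    (Integrable.fintype_prod fun k => hfg (σ k) (τ k)).const_mul _

theorem integral_det_of_mul_det_of (hfg : ∀ i j, Integrable (fun t => f i t * g j t) μ) :
    ∫ x : ι → α, det (of fun k i => f i (x k)) * det (of fun k i => g i (x k))
        ∂(Measure.pi fun _ => μ)
      = (Fintype.card ι).factorial * det (of fun i j => ∫ t, f i t * g j t ∂μ) := by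
  have hterm : ∀ σ τ : Equiv.Perm ι, Integrable (fun x : ι → α =>
      ((Equiv.Perm.sign σ : ℤ) * (Equiv.Perm.sign τ : ℤ) : 𝕜) *
        ∏ k, f (σ k) (x k) * g (τ k) (x k)) (Measure.pi fun _ => μ) :=
    fun σ τ => (Integrable.fintype_prod fun k => hfg (σ k) (τ k)).const_mul _
  simp_rw [det_of_mul_det_of, ← sum_perm_sum_perm_sign_mul_prod]
  rw [integral_finsetSum _ fun σ _ => integrable_finsetSum _ fun τ _ => hterm σ τ]
  refine Finset.sum_congr rfl fun σ _ => ?_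
  rw [integral_finsetSum _ fun τ _ => hterm σ τ]
  refine Finset.sum_congr rfl fun τ _ => ?_
  rw [integral_const_mul, integral_fintype_prod_eq_prod (fun k t => f (σ k) t * g (τ k) t)]
  rfl

end Andreief

section Moments

variable {R : Type*} [NormedCommRing R] [MeasurableSpace R] {μ : Measure R} {w : R → R}

theorem integrable_mul_eval_of_moments (hmom : ∀ j : ℕ, Integrable (fun t => w t * t ^ j) μ)
    (q : R[X]) : Integrable (fun t => w t * q.eval t) μ := by
  induction q using Polynomial.induction_on' with
  | add p q hp hq => simpa only [eval_add, mul_add] using hp.fun_add hq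
  | monomial j a => simpa only [eval_monomial, mul_left_comm] using (hmom j).const_mul a

theorem integrable_eval_mul_mul_eval_of_moments
    (hmom : ∀ j : ℕ, Integrable (fun t => w t * t ^ j) μ) (p q : R[X]) :
    Integrable (fun t => p.eval t * (w t * q.eval t)) μ := by
  simpa only [eval_mul, mul_left_comm] using integrable_mul_eval_of_moments hmom (p * q)

end Moments

section OrthogonalPolynomials

variable {μ : Measure ℝ} [SigmaFinite μ] {w : ℝ → ℝ} {P : ℕ → ℝ[X]}
  (hmom : ∀ j : ℕ, Integrable (fun t => w t * t ^ j) μ) {N : ℕ} (a : Fin N → ℕ)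
include hmom

theorem integrable_det_eval_mul_det_mul_eval :
    Integrable (fun x : Fin N → ℝ => det (of fun k i => (P (a i)).eval (x k)) *
        det (of fun k (i : Fin N) => w (x k) * (P i).eval (x k))) (Measure.pi fun _ => μ) :=
  integrable_det_of_mul_det_of fun _ _ => integrable_eval_mul_mul_eval_of_moments hmom _ _

theorem integral_det_eval_mul_det_mul_eval_eq_zero
    (horth : ∀ j k, j ≠ k → ∫ t, w t * (P j).eval t * (P k).eval t ∂μ = 0)
    (i₀ : Fin N) (ha : N ≤ a i₀) :
    ∫ x : Fin N → ℝ, det (of fun k i => (P (a i)).eval (x k)) *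
        det (of fun k (i : Fin N) => w (x k) * (P i).eval (x k)) ∂(Measure.pi fun _ => μ)
      = 0 := by
  rw [integral_det_of_mul_det_of fun _ _ => integrable_eval_mul_mul_eval_of_moments hmom _ _]
  refine mul_eq_zero_of_right _ (det_eq_zero_of_row_eq_zero i₀ fun k => ?_)
  simp_rw [of_apply, mul_left_comm ((P (a i₀)).eval _), ← mul_assoc]
  exact horth _ _ (k.isLt.trans_le ha).ne'

end OrthogonalPolynomials

theorem heine_average_char_poly_general
    (I : Set ℝ) (w : ℝ → ℝ)
    (hmom : ∀ j : ℕ, IntegrableOn (fun t => w t * t ^ j) I)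
    (P : ℕ → Polynomial ℝ)
    (hmonic : ∀ j, (P j).Monic) (hdeg : ∀ j, (P j).natDegree = j)
    (horth : ∀ j k, j ≠ k → (∫ t in I, w t * (P j).eval t * (P k).eval t) = 0)
    (N : ℕ) (x : ℝ)
    (hZ : 0 < ∫ lam in Set.univ.pi (fun _ : Fin N => I),
        (∏ l, w (lam l)) * (∏ j, ∏ k ∈ Finset.Ioi j, (lam k - lam j)) ^ 2) :
    (∫ lam in Set.univ.pi (fun _ : Fin N => I),
        (∏ m, (x - lam m)) *
          ((∏ l, w (lam l)) * (∏ j, ∏ k ∈ Finset.Ioi j, (lam k - lam j)) ^ 2)) /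
      (∫ lam in Set.univ.pi (fun _ : Fin N => I),
        (∏ l, w (lam l)) * (∏ j, ∏ k ∈ Finset.Ioi j, (lam k - lam j)) ^ 2)
      = (P N).eval x := by
  simp_rw [← det_vandermonde] at hZ ⊢
  rw [volume_pi, Measure.restrict_pi_pi] at hZ ⊢
  simp_rw [prod_sub_mul_prod_mul_det_vandermonde_sq hmonic hdeg,
    prod_mul_det_vandermonde_sq hmonic hdeg] at hZ ⊢
  rw [integral_finsetSum _ fun j _ => (integrable_det_eval_mul_det_mul_eval hmom _).const_mul _,
    Finset.sum_eq_single_of_mem (Fin.last N) (Finset.mem_univ _) fun j _ hj => ?_]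
  · simp_rw [integral_const_mul, Fin.succAbove_last, Fin.val_castSucc, Fin.val_last, ← two_mul,
      pow_mul, neg_one_sq, one_pow, one_mul]
    exact mul_div_cancel_right₀ _ hZ.ne'
  · obtain ⟨i₀, hi₀⟩ := Fin.exists_succAbove_eq (Ne.symm hj)
    rw [integral_const_mul, integral_det_eval_mul_det_mul_eval_eq_zero hmom _ horth i₀
      (by rw [hi₀, Fin.val_last]), mul_zero]

/-- Heine's identity: the average of the characteristic polynomial over the β = 2
ensemble `ME_{2,N}[w]` (eigenvalue density on `I^N` proportional to
`∏ w(λ_l) ∏_{j<k} (λ_k − λ_j)²`) equals the `N`-th monic orthogonal polynomial of `w`. -/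
theorem heine_average_char_poly
    (I : Set ℝ) (hI : MeasurableSet I) (w : ℝ → ℝ) (hw : ∀ t ∈ I, 0 ≤ w t)
    (hmom : ∀ j : ℕ, IntegrableOn (fun t => w t * t ^ j) I)
    (P : ℕ → Polynomial ℝ)
    (hmonic : ∀ j, (P j).Monic) (hdeg : ∀ j, (P j).natDegree = j)
    (horth : ∀ j k, j ≠ k → (∫ t in I, w t * (P j).eval t * (P k).eval t) = 0)
    (hnorm : ∀ j, 0 < ∫ t in I, w t * (P j).eval t ^ 2)
    (N : ℕ) (x : ℝ)
    (hZ : 0 < ∫ lam in Set.univ.pi (fun _ : Fin N => I),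
        (∏ l, w (lam l)) * (∏ j, ∏ k ∈ Finset.Ioi j, (lam k - lam j)) ^ 2) :
    (∫ lam in Set.univ.pi (fun _ : Fin N => I),
        (∏ m, (x - lam m)) *
          ((∏ l, w (lam l)) * (∏ j, ∏ k ∈ Finset.Ioi j, (lam k - lam j)) ^ 2)) /
      (∫ lam in Set.univ.pi (fun _ : Fin N => I),
        (∏ l, w (lam l)) * (∏ j, ∏ k ∈ Finset.Ioi j, (lam k - lam j)) ^ 2)
      = (P N).eval x :=
  heine_average_char_poly_general I w hmom P hmonic hdeg horth N x hZ
end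

section
/- For the β=2 ensemble with weight w and monic orthogonal polynomials (p_j), the average of a product of p characteristic polynomials at distinct points x_1,…,x_p equals det[p_{N+j−1}(x_k)]_{j,k=1,…,p} divided by the Vandermonde ∏_{1≤j<k≤p}(x_k − x_j). -/
/-!
Heine's argument, with `Δ` the Vandermonde product. Since `∏ w(λᵢ) Δ(λ) = det [w(λᵢ) pⱼ(λᵢ)]`
and `Δ(λ) Δ(x) ∏ (xₗ - λₘ) = Δ(λ, x) = det [pⱼ(zᵢ)]_{j < N + p}` for `z = (λ, x)`, the numerator
times `Δ(x)` is the integral of a product of two determinants. Expanding the first, each term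
integrates row by row against the second (multilinearity and Fubini), and orthogonality makes the
integrated matrix block lower triangular, with a permuted diagonal of the norms `hⱼ` in the top
left and `[p_{N+j}(x_k)]` in the bottom right. Hence numerator times `Δ(x)` equals
`N! ∏ hⱼ · det [p_{N+j}(x_k)]`, and the case `p = 0` evaluates the denominator.
-/

open MeasureTheory Matrix Polynomial Equiv

section Vandermonde

variable {R : Type*} [CommRing R]

theorem Matrix.det_vandermonde_snoc {n : ℕ} (v : Fin n → R) (a : R) :
    (vandermonde (Fin.snoc v a : Fin (n + 1) → R)).det = (vandermonde v).det * ∏ i, (a - v i) := by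
  have hIio : ∀ {m} (u : Fin m → R),
      (vandermonde u).det = ∏ j, ∏ i ∈ Finset.Iio j, (u j - u i) := fun u => by
    rw [det_vandermonde]; exact Finset.prod_comm' (by simp)
  simp only [hIio, Fin.prod_univ_castSucc, Fin.prod_Iio_castSucc, Fin.Iio_last_eq_map,
    Finset.prod_map, Fin.snoc_castSucc, Fin.snoc_last, Fin.coe_castSuccEmb]

theorem Matrix.det_vandermonde_append {m : ℕ} (u : Fin m → R) : ∀ {n : ℕ} (v : Fin n → R),
    (vandermonde (Fin.append u v)).det =
      (vandermonde u).det * (vandermonde v).det * ∏ i, ∏ j, (v i - u j)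
  | 0, v => by
    have : Fin.append u v = u := funext fun i => Fin.append_left u v i
    simp [this]
  | n + 1, v => by
    rw [← Fin.snoc_init_self v, Fin.append_snoc, det_vandermonde_snoc,
      det_vandermonde_append u (Fin.init v), det_vandermonde_snoc, Fin.prod_univ_castSucc]
    -- `Fin.append_snoc` leaves the index type as `Fin (m.add n)`, hence `erw`
    erw [Fin.prod_univ_add]
    simp only [Fin.append_left, Fin.append_right, Fin.snoc_castSucc, Fin.snoc_last]
    ring

end Vandermonde

section BlockRows

variable {R ι κ : Type*} [CommRing R] [Fintype ι] [DecidableEq ι] [Fintype κ] [DecidableEq κ]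

theorem Matrix.det_of_sumElim (A : ι → ι ⊕ κ → R) (B : κ → ι ⊕ κ → R) :
    (of (Sum.elim A B)).det = ∑ σ : Perm (ι ⊕ κ),
      ((Perm.sign σ : ℤ) : R) * ((∏ i, A i (σ (.inl i))) * ∏ k, B k (σ (.inr k))) := by
  rw [← det_transpose, det_apply']
  simp [Fintype.prod_sum_type]

theorem Matrix.det_of_sumElim_piSingle (σ : Perm ι) (h : ι → R) (B : κ → ι ⊕ κ → R) :
    (of (Sum.elim (fun i => Pi.single (.inl (σ i)) (h (σ i))) B)).det =
      Perm.sign σ * (∏ i, h i) * (of fun k l => B k (.inr l)).det := by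
  set M := of (Sum.elim (fun i => Pi.single (.inl (σ i)) (h (σ i))) B)
  have h₁₁ : M.toBlocks₁₁ = (diagonal h).submatrix σ id := by
    ext i j
    simp [M, toBlocks₁₁, Pi.single_apply, diagonal_apply, eq_comm]
  have h₁₂ : M.toBlocks₁₂ = 0 := by
    ext i k
    simp [M, toBlocks₁₂]
  rw [← fromBlocks_toBlocks M, h₁₁, h₁₂, det_fromBlocks_zero₁₂, det_permute, det_diagonal]
  rfl

end BlockRows

section Integral

variable {𝕜 α ι κ : Type*} [RCLike 𝕜] [Fintype ι] [DecidableEq ι] [Fintype κ] [DecidableEq κ]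
  [MeasurableSpace α] {μ : Measure α} [SigmaFinite μ]

theorem integrable_det_of_sumElim {u : ι → α → ι ⊕ κ → 𝕜} (B : κ → ι ⊕ κ → 𝕜)
    (hu : ∀ i c, Integrable (fun t => u i t c) μ) :
    Integrable (fun y : ι → α => (of (Sum.elim (fun i => u i (y i)) B)).det)
      (Measure.pi fun _ => μ) := by
  simp_rw [det_of_sumElim]
  exact integrable_finsetSum _ fun σ _ =>
    ((Integrable.fintype_prod fun i => hu i _).mul_const _).const_mul _

theorem integral_det_of_sumElim {u : ι → α → ι ⊕ κ → 𝕜} (B : κ → ι ⊕ κ → 𝕜)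
    (hu : ∀ i c, Integrable (fun t => u i t c) μ) :
    ∫ y : ι → α, (of (Sum.elim (fun i => u i (y i)) B)).det ∂(Measure.pi fun _ => μ) =
      (of (Sum.elim (fun i c => ∫ t, u i t c ∂μ) B)).det := by
  simp_rw [det_of_sumElim]
  rw [integral_finsetSum _ fun σ _ =>
    ((Integrable.fintype_prod fun i => hu i _).mul_const _).const_mul _]
  simp_rw [integral_const_mul, integral_mul_const]
  refine Finset.sum_congr rfl fun σ _ => ?_
  rw [integral_fintype_prod_eq_prod (fun i t => u i t (σ (.inl i)))]

theorem integral_det_mul_det_of_biorthogonal (f : ι → α → 𝕜) (g : ι ⊕ κ → α → 𝕜)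
    (B : κ → ι ⊕ κ → 𝕜) (hint : ∀ i c, Integrable (fun t => f i t * g c t) μ)
    (horth : ∀ i c, c ≠ .inl i → ∫ t, f i t * g c t ∂μ = 0) :
    ∫ y : ι → α, (of fun i j => f j (y i)).det * (of (Sum.elim (fun i c => g c (y i)) B)).det
        ∂(Measure.pi fun _ => μ) =
      (Fintype.card ι).factorial * (∏ i, ∫ t, f i t * g (.inl i) t ∂μ) *
        (of fun k l => B k (.inr l)).det := by
  set h : ι → 𝕜 := fun i => ∫ t, f i t * g (.inl i) t ∂μ
  have hrow (σ : Perm ι) (y : ι → α) :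
      (∏ i, f (σ i) (y i)) * (of (Sum.elim (fun i c => g c (y i)) B)).det =
        (of (Sum.elim (fun i c => f (σ i) (y i) * g c (y i)) B)).det := by
    convert (det_mul_column (Sum.elim (fun i => f (σ i) (y i)) 1)
      (of (Sum.elim (fun i c => g c (y i)) B))).symm using 2
    · simp [Fintype.prod_sum_type]
    · ext (i | k) c <;> simp
  have hentry (σ : Perm ι) : (fun i c => ∫ t, f (σ i) t * g c t ∂μ) =
      fun i => Pi.single (.inl (σ i)) (h (σ i)) := by
    ext i c
    by_cases hc : c = .inl (σ i)
    · subst hc; simp [h]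
    · simp [hc, horth _ _ hc]
  have hsign (σ : Perm ι) : ((Perm.sign σ : ℤ) : 𝕜) * (Perm.sign σ : ℤ) = 1 := by
    rw [← Int.cast_mul, ← Units.val_mul, Int.units_mul_self, Units.val_one, Int.cast_one]
  calc _ = ∫ y : ι → α, ∑ σ : Perm ι, ((Perm.sign σ : ℤ) : 𝕜) *
          (of (Sum.elim (fun i c => f (σ i) (y i) * g c (y i)) B)).det
          ∂(Measure.pi fun _ => μ) := by
        congr 1; ext y
        rw [← det_transpose, det_apply', Finset.sum_mul]
        simp_rw [mul_assoc, ← hrow]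
        rfl
    _ = ∑ σ : Perm ι, ((Perm.sign σ : ℤ) : 𝕜) *
          (of (Sum.elim (fun i c => ∫ t, f (σ i) t * g c t ∂μ) B)).det := by
        rw [integral_finsetSum _ fun σ _ =>
          (integrable_det_of_sumElim B fun i c => hint (σ i) c).const_mul _]
        refine Finset.sum_congr rfl fun σ _ => ?_
        rw [integral_const_mul, integral_det_of_sumElim B fun i c => hint (σ i) c]
    _ = ∑ _σ : Perm ι, (∏ i, h i) * (of fun k l => B k (.inr l)).det := by
        simp_rw [hentry, det_of_sumElim_piSingle, ← mul_assoc, hsign, one_mul]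
    _ = _ := by
        rw [Finset.sum_const, Finset.card_univ, Fintype.card_perm, nsmul_eq_mul, mul_assoc]

end Integral

theorem Polynomial.integrable_mul_eval {μ : Measure ℝ} {w : ℝ → ℝ}
    (hmom : ∀ j : ℕ, Integrable (fun t => w t * t ^ j) μ) (q : ℝ[X]) :
    Integrable (fun t => w t * q.eval t) μ := by
  simp_rw [eval_eq_sum_range, Finset.mul_sum, mul_left_comm (w _)]
  exact integrable_finsetSum _ fun i _ => (hmom i).const_mul _

theorem integral_prod_charpoly_mul_det_vandermonde {μ : Measure ℝ} [SigmaFinite μ] {w : ℝ → ℝ}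
    {P : ℕ → ℝ[X]} (hmonic : ∀ j, (P j).Monic) (hdeg : ∀ j, (P j).natDegree = j)
    (hint : ∀ j k, Integrable (fun t => w t * (P j).eval t * (P k).eval t) μ)
    (horth : ∀ j k, j ≠ k → ∫ t, w t * (P j).eval t * (P k).eval t ∂μ = 0)
    (N : ℕ) {p : ℕ} (x : Fin p → ℝ) :
    (∫ lam : Fin N → ℝ, (∏ l, ∏ m, (x l - lam m)) *
        ((∏ l, w (lam l)) * (vandermonde lam).det ^ 2) ∂(Measure.pi fun _ => μ)) *
        (vandermonde x).det =
      N.factorial * (∏ j : Fin N, ∫ t, w t * (P j).eval t * (P j).eval t ∂μ) *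
        (of fun j k : Fin p => (P (N + j)).eval (x k)).det := by
  set idx : Fin N ⊕ Fin p → ℕ := fun c => finSumFinEquiv c
  have hweighted (lam : Fin N → ℝ) :
      (of fun i j : Fin N => w (lam i) * (P j).eval (lam i)).det =
        (∏ i, w (lam i)) * (vandermonde lam).det := by
    have := det_mul_column (fun i => w (lam i)) (of fun i j : Fin N => (P j).eval (lam i))
    simp only [of_apply] at this
    rw [this, det_eval_matrixOfPolynomials_eq_det_vandermonde lam (fun j => P j)
      (fun j => hdeg j) (fun j => hmonic j)]
  have hjoint (lam : Fin N → ℝ) :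
      (of (Sum.elim (fun i c => (P (idx c)).eval (lam i)) fun k c => (P (idx c)).eval (x k))).det =
        (vandermonde (Fin.append lam x)).det := by
    rw [det_eval_matrixOfPolynomials_eq_det_vandermonde (Fin.append lam x) (fun j => P j)
      (fun j => hdeg j) (fun j => hmonic j), ← det_submatrix_equiv_self finSumFinEquiv]
    congr
    ext (i | k) c <;> simp [idx]
  have horth' : ∀ (i : Fin N) c, c ≠ .inl i →
      ∫ t, w t * (P i).eval t * (P (idx c)).eval t ∂μ = 0 := by
    rintro i (j | l) hc
    · exact horth _ _ (by simpa [idx, Fin.val_inj, eq_comm] using hc)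
    · exact horth _ _ (by simp [idx]; omega)
  rw [← integral_mul_const]
  calc _ = ∫ lam : Fin N → ℝ, (of fun i j : Fin N => w (lam i) * (P j).eval (lam i)).det *
        (of (Sum.elim (fun i c => (P (idx c)).eval (lam i))
          fun k c => (P (idx c)).eval (x k))).det ∂(Measure.pi fun _ => μ) := by
        congr 1; ext lam
        rw [hweighted, hjoint, det_vandermonde_append]
        ring
    _ = _ := by
        rw [integral_det_mul_det_of_biorthogonal (fun (j : Fin N) t => w t * (P j).eval t)
          (fun c t => (P (idx c)).eval t) _ (fun j c => hint j (idx c)) horth',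
          Fintype.card_fin, ← det_transpose]
        rfl

theorem product_char_poly_determinant_formula_general
    (I : Set ℝ) (w : ℝ → ℝ)
    (hmom : ∀ j : ℕ, IntegrableOn (fun t => w t * t ^ j) I)
    (P : ℕ → Polynomial ℝ)
    (hmonic : ∀ j, (P j).Monic) (hdeg : ∀ j, (P j).natDegree = j)
    (horth : ∀ j k, j ≠ k → (∫ t in I, w t * (P j).eval t * (P k).eval t) = 0)
    (N p : ℕ) (x : Fin p → ℝ) (hx : Function.Injective x)
    (hZ : 0 < ∫ lam in Set.univ.pi (fun _ : Fin N => I),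
        (∏ l, w (lam l)) * (∏ j, ∏ k ∈ Finset.Ioi j, (lam k - lam j)) ^ 2) :
    (∫ lam in Set.univ.pi (fun _ : Fin N => I),
        (∏ l, ∏ m, (x l - lam m)) *
          ((∏ l, w (lam l)) * (∏ j, ∏ k ∈ Finset.Ioi j, (lam k - lam j)) ^ 2)) /
      (∫ lam in Set.univ.pi (fun _ : Fin N => I),
        (∏ l, w (lam l)) * (∏ j, ∏ k ∈ Finset.Ioi j, (lam k - lam j)) ^ 2)
      = (Matrix.of fun j k : Fin p => (P (N + j.val)).eval (x k)).det /
          ∏ j, ∏ k ∈ Finset.Ioi j, (x k - x j) := by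
  have hint (j k : ℕ) :
      Integrable (fun t => w t * (P j).eval t * (P k).eval t) (volume.restrict I) := by
    simpa only [eval_mul, mul_assoc] using Polynomial.integrable_mul_eval hmom (P j * P k)
  have hpi : (volume : Measure (Fin N → ℝ)).restrict (Set.univ.pi fun _ => I) =
      Measure.pi fun _ => volume.restrict I := by
    rw [volume_pi, Measure.restrict_pi_pi]
  have key := integral_prod_charpoly_mul_det_vandermonde hmonic hdeg hint horth N x
  have key₀ := integral_prod_charpoly_mul_det_vandermonde hmonic hdeg hint horth N ![]
  simp only [Finset.univ_eq_empty, Finset.prod_empty, one_mul, mul_one, det_isEmpty] at key₀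
  simp only [← det_vandermonde] at hZ ⊢
  rw [hpi] at hZ ⊢
  rw [div_eq_div_iff hZ.ne' (det_vandermonde_ne_zero_iff.2 hx), key, key₀]
  ring

/-- For the β = 2 ensemble `ME_{2,N}[w]` with monic orthogonal polynomials `(p_j)`,
the average of a product of `p` characteristic polynomials at pairwise distinct points
`x_1, …, x_p` equals `det[p_{N+j−1}(x_k)] / ∏_{j<k} (x_k − x_j)`. -/
theorem product_char_poly_determinant_formula
    (I : Set ℝ) (hI : MeasurableSet I) (w : ℝ → ℝ) (hw : ∀ t ∈ I, 0 ≤ w t)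
    (hmom : ∀ j : ℕ, IntegrableOn (fun t => w t * t ^ j) I)
    (P : ℕ → Polynomial ℝ)
    (hmonic : ∀ j, (P j).Monic) (hdeg : ∀ j, (P j).natDegree = j)
    (horth : ∀ j k, j ≠ k → (∫ t in I, w t * (P j).eval t * (P k).eval t) = 0)
    (hnorm : ∀ j, 0 < ∫ t in I, w t * (P j).eval t ^ 2)
    (N p : ℕ) (x : Fin p → ℝ) (hx : Function.Injective x)
    (hZ : 0 < ∫ lam in Set.univ.pi (fun _ : Fin N => I),
        (∏ l, w (lam l)) * (∏ j, ∏ k ∈ Finset.Ioi j, (lam k - lam j)) ^ 2) :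
    (∫ lam in Set.univ.pi (fun _ : Fin N => I),
        (∏ l, ∏ m, (x l - lam m)) *
          ((∏ l, w (lam l)) * (∏ j, ∏ k ∈ Finset.Ioi j, (lam k - lam j)) ^ 2)) /
      (∫ lam in Set.univ.pi (fun _ : Fin N => I),
        (∏ l, w (lam l)) * (∏ j, ∏ k ∈ Finset.Ioi j, (lam k - lam j)) ^ 2)
      = (Matrix.of fun j k : Fin p => (P (N + j.val)).eval (x k)).det /
          ∏ j, ∏ k ∈ Finset.Ioi j, (x k - x j) :=
  product_char_poly_determinant_formula_general I w hmom P hmonic hdeg horth N p x hx hZ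
end

section
/- The Wronskian-type determinant of Laguerre polynomials equals, up to sign, a Toeplitz-type determinant of shifted Laguerre polynomials: det[(d/dx)^{k−1} L_{N+j−1}^{(a)}(x)]_{j,k=1,…,p} = (−1)^{p(p−1)/2} det[L_{N+j−k}^{(a+k−j)}(x)]_{j,k=1,…,p}. -/
open MeasureTheory

/-- The generalized Laguerre polynomial `L_n^{(a)}(x)`, with real parameter `a`,
defined by `L_n^{(a)}(x) = Σ_{k=0}^n (−1)^k binom(n+a, n−k) x^k / k!`, where
`binom(n+a, n−k) = (∏_{i=k+1}^n (a+i)) / (n−k)!`. -/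
noncomputable def genLaguerre (n : ℕ) (a : ℝ) (x : ℝ) : ℝ :=
  ∑ k ∈ Finset.range (n + 1),
    (-1) ^ k / (Nat.factorial k : ℝ) *
      ((∏ i ∈ Finset.Icc (k + 1) n, (a + (i : ℝ))) / (Nat.factorial (n - k) : ℝ)) *
      x ^ k

/-!
Both sides are determinants of matrices built from `A_{jk} = L_{N+j-k}^{(a+k)}(x)`.
Differentiating lowers the degree and raises the parameter, so the `k`-th derivative of
`L_{N+j}^{(a)}` is `(-1)^k A_{jk}`, and the Wronskian is `(-1)^{0+1+⋯+(p-1)} det A`.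
Iterating `L_n^{(b)} = L_n^{(b+1)} - L_{n-1}^{(b+1)}` expresses `L_{N+j-k}^{(a+k-j)}` as the
`j`-th forward difference of `i ↦ A_{ik}`, so the Toeplitz matrix is `P * A` with `P` the unit
lower triangular signed Pascal matrix `P_{ji} = (-1)^{j-i} binom(j, i)`.
-/

open Finset Nat Matrix

theorem Ring.choose_eq_prod_range_div {K : Type*} [Field K] [CharZero K] (r : K) (m : ℕ) :
    Ring.choose r m = (∏ j ∈ range m, (r - j)) / m ! := by
  rw [Ring.choose_eq_smul, ← descPochhammer_eval_eq_prod_range, smul_eq_mul, inv_mul_eq_div,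
    ← descPochhammer_map (algebraMap ℤ K), Polynomial.eval_map_algebraMap,
    Polynomial.aeval_eq_smeval]

theorem prod_Icc_add_eq_prod_range_sub {R : Type*} [CommRing R] (a : R) (k m : ℕ) :
    ∏ i ∈ Icc (k + 1) (k + m), (a + i) = ∏ j ∈ range m, (a + ↑(k + m) - j) := by
  induction m with
  | zero => simp
  | succ m ih =>
    rw [← add_assoc, prod_Icc_succ_top (by omega), ih, prod_range_succ']
    push_cast
    congr 1
    · exact prod_congr rfl fun j _ => by ring
    · ring

theorem Fin.prod_pow_val {M : Type*} [CommMonoid M] (r : M) (p : ℕ) :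
    ∏ k : Fin p, r ^ (k : ℕ) = r ^ (p * (p - 1) / 2) := by
  rw [prod_pow_eq_pow_sum, Fin.sum_univ_eq_sum_range (fun k => k) p, sum_range_id]

section SignedPascal

variable (R : Type*) [CommRing R] (p : ℕ)

def signedPascalMatrix : Matrix (Fin p) (Fin p) R :=
  of fun j i => (-1) ^ ((j : ℕ) - i) * ((j : ℕ).choose i : R)

theorem det_signedPascalMatrix : (signedPascalMatrix R p).det = 1 := by
  have hlower : (signedPascalMatrix R p).IsLowerTriangular := fun j i hij => by
    simp [signedPascalMatrix, Nat.choose_eq_zero_of_lt (show (j : ℕ) < i from hij)]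
  rw [det_of_isLowerTriangular _ hlower]
  exact prod_eq_one fun i _ => by simp [signedPascalMatrix]

variable {R p}

theorem signedPascalMatrix_mul_of_apply {q : ℕ} (f : ℕ → Fin q → R) (j : Fin p) (k : Fin q) :
    (signedPascalMatrix R p * of fun (i : Fin p) k => f i k) j k
      = ∑ i ∈ range ((j : ℕ) + 1), (-1) ^ ((j : ℕ) - i) * ((j : ℕ).choose i : R) * f i k := by
  let g i := (-1) ^ ((j : ℕ) - i) * ((j : ℕ).choose i : R) * f i k
  calc (signedPascalMatrix R p * of fun (i : Fin p) k => f i k) j k = ∑ i ∈ range p, g i :=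
        Fin.sum_univ_eq_sum_range g p
    _ = ∑ i ∈ range ((j : ℕ) + 1), g i := by
        refine (sum_subset (range_subset_range.mpr j.isLt) fun i _ hi => ?_).symm
        simp [g, Nat.choose_eq_zero_of_lt (show (j : ℕ) < i by simpa using hi)]

end SignedPascal

theorem genLaguerre_eq_sum_choose (n : ℕ) (a x : ℝ) :
    genLaguerre n a x
      = ∑ k ∈ range (n + 1), (-1) ^ k / k ! * Ring.choose (a + n) (n - k) * x ^ k := by
  refine sum_congr rfl fun k hk => ?_
  obtain ⟨m, rfl⟩ := Nat.exists_eq_add_of_le (Nat.lt_succ_iff.mp (mem_range.mp hk))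
  rw [Ring.choose_eq_prod_range_div, prod_Icc_add_eq_prod_range_sub, Nat.add_sub_cancel_left]

theorem genLaguerre_succ_eq_sub (n : ℕ) (a x : ℝ) :
    genLaguerre (n + 1) a x = genLaguerre (n + 1) (a + 1) x - genLaguerre n (a + 1) x := by
  simp only [genLaguerre_eq_sum_choose, sum_range_succ _ (n + 1), Nat.sub_self,
    Ring.choose_zero_right, add_sub_right_comm, ← sum_sub_distrib]
  congr 1
  refine sum_congr rfl fun k hk => ?_
  have hr : a + 1 + ↑(n + 1) = a + ↑(n + 1) + 1 := by ring
  have hr' : a + 1 + n = a + ↑(n + 1) := by push_cast; ring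
  rw [hr, hr', Nat.succ_sub (Nat.lt_succ_iff.mp (mem_range.mp hk)), Ring.choose_succ_succ]
  ring

theorem hasDerivAt_genLaguerre_succ (n : ℕ) (a x : ℝ) :
    HasDerivAt (genLaguerre (n + 1) a) (-genLaguerre n (a + 1) x) x := by
  have hsum := HasDerivAt.fun_sum (u := range (n + 2)) (x := x) fun k _ =>
    (hasDerivAt_pow k x).const_mul ((-1) ^ k / k ! * Ring.choose (a + ↑(n + 1)) (n + 1 - k))
  rw [show genLaguerre (n + 1) a = _ from funext (genLaguerre_eq_sum_choose (n + 1) a)]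
  refine hsum.congr_deriv ?_
  rw [sum_range_succ', genLaguerre_eq_sum_choose, ← sum_neg_distrib]
  simp only [Nat.cast_zero, zero_mul, mul_zero, add_zero, Nat.add_sub_add_right]
  refine sum_congr rfl fun k _ => ?_
  rw [show a + 1 + (n : ℝ) = a + ↑(n + 1) by push_cast; ring, factorial_succ]
  push_cast
  field_simp
  ring

theorem iteratedDeriv_genLaguerre {k n : ℕ} (h : k ≤ n) (a : ℝ) :
    iteratedDeriv k (genLaguerre n a) = fun x => (-1) ^ k * genLaguerre (n - k) (a + k) x := by
  induction k generalizing n a with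
  | zero => simp
  | succ k ih =>
    obtain ⟨m, rfl⟩ := Nat.exists_eq_add_of_le' (Nat.one_le_of_lt h)
    have hderiv : deriv (genLaguerre (m + 1) a) = fun x => -genLaguerre m (a + 1) x :=
      funext fun x => (hasDerivAt_genLaguerre_succ m a x).deriv
    funext x
    rw [iteratedDeriv_succ', hderiv, iteratedDeriv_fun_neg, ih (by omega),
      Nat.add_sub_add_right, show a + 1 + (k : ℝ) = a + ↑(k + 1) by push_cast; ring, pow_succ]
    ring

theorem fwdDiff_iter_genLaguerre (m : ℕ) (c x : ℝ) (n : ℕ) :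
    (fwdDiff 1)^[m] (fun i => genLaguerre i c x) n = genLaguerre (n + m) (c - m) x := by
  induction m generalizing n with
  | zero => simp
  | succ m ih =>
    have hc : c - ↑(m + 1) + 1 = c - m := by push_cast; ring
    rw [Function.iterate_succ_apply', fwdDiff, ih, ih, ← add_assoc, genLaguerre_succ_eq_sub, hc,
      add_right_comm]

theorem genLaguerre_add_sub_eq_sum (n m : ℕ) (c x : ℝ) :
    genLaguerre (n + m) (c - m) x
      = ∑ i ∈ range (m + 1), (-1) ^ (m - i) * (m.choose i : ℝ) * genLaguerre (n + i) c x := by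
  rw [← fwdDiff_iter_genLaguerre, fwdDiff_iter_eq_sum_shift]
  simp [zsmul_eq_mul]

/-- The Wronskian-type determinant of Laguerre polynomials equals, up to sign,
a Toeplitz-type determinant of shifted Laguerre polynomials:
`det[(d/dx)^{k−1} L_{N+j−1}^{(a)}(x)] = (−1)^{p(p−1)/2} det[L_{N+j−k}^{(a+k−j)}(x)]`. -/
theorem laguerre_wronskian_toeplitz (p N : ℕ) (hp : p ≤ N + 1) (a x : ℝ) :
    (Matrix.of fun j k : Fin p =>
        iteratedDeriv k.val (genLaguerre (N + j.val) a) x).det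
      = (-1) ^ (p * (p - 1) / 2) *
        (Matrix.of fun j k : Fin p =>
          genLaguerre (N + j.val - k.val) (a + (k.val : ℝ) - (j.val : ℝ)) x).det := by
  have hkN (k : Fin p) : (k : ℕ) ≤ N := by omega
  set A : Matrix (Fin p) (Fin p) ℝ := of fun i k => genLaguerre (N - k + i) (a + k) x
  have hwronskian : (of fun j k : Fin p => iteratedDeriv k (genLaguerre (N + j) a) x)
      = of fun j k : Fin p => (-1) ^ (k : ℕ) * A j k := by
    ext j k
    rw [of_apply, iteratedDeriv_genLaguerre (by omega), show N + j - k = N - k + j by omega]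
    rfl
  have htoeplitz : (of fun j k : Fin p => genLaguerre (N + j - k) (a + k - j) x)
      = signedPascalMatrix ℝ p * A := by
    ext j k
    rw [signedPascalMatrix_mul_of_apply (fun i (k : Fin p) => genLaguerre (N - k + i) (a + k) x),
      of_apply, show N + j - k = N - k + j by omega, genLaguerre_add_sub_eq_sum]
  rw [hwronskian, det_mul_row, Fin.prod_pow_val, htoeplitz, det_mul, det_signedPascalMatrix,
    one_mul]
end

section
/- Heine's Hankel determinant formula: if α_j := ∫_I a(t) t^j dt for an integrable weight a, then det[α_{j+k}]_{j,k=0,…,n−1} = (1/n!) ∫_{I^n} ∏_{l=1}^n a(x_l) · ∏_{1≤j<k≤n} (x_k − x_j)² dx_1…dx_n. -/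
/-!
The Vandermonde product is `det [x_j ^ i]`, and the weight can be absorbed into one of the two
factors, so the integrand is `det [f_i(x_j)] · det [g_i(x_j)]` with `f_i t = a t * t ^ i` and
`g_i t = t ^ i`. Expanding both determinants by the Leibniz formula and integrating term by term
(Fubini for products of one-variable functions) gives `∑_{σ,τ} sign σ sign τ ∏_i ∫ f_{σ i} g_{τ i}`.
For fixed `σ` the sum over `τ` is the determinant of the moment matrix with rows permuted by `σ`,
i.e. `sign σ · det [α_{i+j}]`, so the `n!` values of `σ` contribute `n! · det [α_{i+j}]`.
-/

open MeasureTheory Matrix Equiv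

namespace Matrix

variable {ι R : Type*} [Fintype ι] [DecidableEq ι] [CommRing R]

theorem sum_perm_sum_perm_sign_mul_sign_mul_prod (m : Matrix ι ι R) :
    ∑ σ : Perm ι, ∑ τ : Perm ι, (Perm.sign σ * Perm.sign τ : ℤ) * ∏ i, m (σ i) (τ i)
      = (Fintype.card ι).factorial * m.det := by
  have row_permuted : ∀ σ : Perm ι,
      ∑ τ : Perm ι, (Perm.sign σ * Perm.sign τ : ℤ) * ∏ i, m (σ i) (τ i) = m.det := by
    intro σ
    calc ∑ τ : Perm ι, (Perm.sign σ * Perm.sign τ : ℤ) * ∏ i, m (σ i) (τ i)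
        = Perm.sign σ * ∑ τ : Perm ι, Perm.sign τ * ∏ i, (m.submatrix σ id)ᵀ (τ i) i := by
          simp only [Finset.mul_sum, Int.cast_mul, mul_assoc, transpose_apply, submatrix_apply,
            id]
      _ = Perm.sign σ * (Perm.sign σ * m.det) := by
          rw [← det_apply', det_transpose, det_permute]
      _ = m.det := by
          rw [← mul_assoc, ← Int.cast_mul, ← Units.val_mul, Int.units_mul_self, Units.val_one,
            Int.cast_one, one_mul]
  simp_rw [row_permuted, Finset.sum_const, Finset.card_univ, Fintype.card_perm, nsmul_eq_mul]

theorem det_of_pow_eq_prod_sub {n : ℕ} (x : Fin n → R) :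
    (of fun i j : Fin n => x j ^ (i : ℕ)).det = ∏ i, ∏ j ∈ Finset.Ioi i, (x j - x i) := by
  rw [← det_vandermonde, ← det_transpose]
  rfl

end Matrix

namespace MeasureTheory

variable {ι α 𝕜 : Type*} [Fintype ι] [DecidableEq ι] [RCLike 𝕜] [MeasurableSpace α]

/-- Andreief's identity. -/
theorem integral_det_mul_det (μ : Measure α) [SigmaFinite μ] (f g : ι → α → 𝕜)
    (hfg : ∀ i j, Integrable (fun t => f i t * g j t) μ) :
    ∫ x, (of fun i j => f i (x j)).det * (of fun i j => g i (x j)).det ∂(Measure.pi fun _ => μ)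
      = (Fintype.card ι).factorial * (of fun i j => ∫ t, f i t * g j t ∂μ).det := by
  have leibniz : ∀ x : ι → α,
      (of fun i j => f i (x j)).det * (of fun i j => g i (x j)).det
        = ∑ σ : Perm ι, ∑ τ : Perm ι,
            (Perm.sign σ * Perm.sign τ : ℤ) * ∏ i, f (σ i) (x i) * g (τ i) (x i) := by
    intro x
    simp_rw [det_apply', Finset.sum_mul_sum, Finset.prod_mul_distrib, of_apply]
    push_cast
    exact Finset.sum_congr rfl fun _ _ => Finset.sum_congr rfl fun _ _ => by ring
  have term_integrable : ∀ σ τ : Perm ι,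
      Integrable (fun x : ι → α => ∏ i, f (σ i) (x i) * g (τ i) (x i)) (Measure.pi fun _ => μ) :=
    fun σ τ => Integrable.fintype_prod fun i => hfg (σ i) (τ i)
  simp_rw [leibniz]
  rw [integral_finsetSum _ fun σ _ => integrable_finsetSum _ fun τ _ =>
    (term_integrable σ τ).const_mul _]
  refine (Finset.sum_congr rfl fun σ _ => ?_).trans
    (sum_perm_sum_perm_sign_mul_sign_mul_prod (of fun i j => ∫ t, f i t * g j t ∂μ))
  rw [integral_finsetSum _ fun τ _ => (term_integrable σ τ).const_mul _]
  refine Finset.sum_congr rfl fun τ _ => ?_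
  rw [integral_const_mul, integral_fintype_prod_eq_prod fun i t => f (σ i) t * g (τ i) t]
  rfl

end MeasureTheory

theorem heine_hankel_determinant_general
    (I : Set ℝ) (a : ℝ → ℝ)
    (hmom : ∀ j : ℕ, IntegrableOn (fun t => a t * t ^ j) I)
    (n : ℕ) :
    (Matrix.of fun j k : Fin n => ∫ t in I, a t * t ^ (j.val + k.val)).det
      = (1 / (Nat.factorial n : ℝ)) *
        ∫ x in Set.univ.pi (fun _ : Fin n => I),
          (∏ l, a (x l)) * (∏ j, ∏ k ∈ Finset.Ioi j, (x k - x j)) ^ 2 := by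
  have integrand : ∀ x : Fin n → ℝ,
      (∏ l, a (x l)) * (∏ j, ∏ k ∈ Finset.Ioi j, (x k - x j)) ^ 2
        = (of fun i j : Fin n => a (x j) * x j ^ (i : ℕ)).det
          * (of fun i j : Fin n => x j ^ (i : ℕ)).det := by
    intro x
    have h := det_mul_row (fun j => a (x j)) (of fun i j : Fin n => x j ^ (i : ℕ))
    simp only [of_apply] at h
    rw [h, det_of_pow_eq_prod_sub, sq, mul_assoc]
  have moments : ∀ i j : Fin n,
      ∫ t in I, (a t * t ^ (i : ℕ)) * t ^ (j : ℕ) = ∫ t in I, a t * t ^ (i.val + j.val) := by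
    intro i j
    simp only [pow_add, mul_assoc]
  rw [volume_pi, Measure.restrict_pi_pi, integral_congr_ae (.of_forall integrand),
    integral_det_mul_det _ (fun (i : Fin n) t => a t * t ^ (i : ℕ))
      (fun (j : Fin n) t => t ^ (j : ℕ)) fun i j => by
        simpa only [mul_assoc, ← pow_add] using (hmom (i.val + j.val)).integrable]
  simp_rw [moments, Fintype.card_fin]
  field_simp

/-- Heine's Hankel determinant formula: with moments `α_j = ∫_I a(t) t^j dt`,
`det[α_{j+k}]_{j,k=0,…,n−1} = (1/n!) ∫_{I^n} ∏ a(x_l) ∏_{j<k} (x_k − x_j)² dx`. -/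
theorem heine_hankel_determinant
    (I : Set ℝ) (hI : MeasurableSet I) (a : ℝ → ℝ)
    (hmom : ∀ j : ℕ, IntegrableOn (fun t => a t * t ^ j) I)
    (n : ℕ) :
    (Matrix.of fun j k : Fin n => ∫ t in I, a t * t ^ (j.val + k.val)).det
      = (1 / (Nat.factorial n : ℝ)) *
        ∫ x in Set.univ.pi (fun _ : Fin n => I),
          (∏ l, a (x l)) * (∏ j, ∏ k ∈ Finset.Ioi j, (x k - x j)) ^ 2 :=
  heine_hankel_determinant_general I a hmom n
end
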